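/- Let S be a random variable with the beta distribution β(s, t), s > 0, t > 0. Then E[ln(S) · ln(1 − S)] = −ψ′(s + t) + (ψ(s) − ψ(s + t))(ψ(t) − ψ(s + t)); equivalently Cov(ln S, ln(1 − S)) = −ψ′(s + t). -/

import Mathlib

open MeasureTheory ProbabilityTheory

/-- The beta distribution `β(s, t)` with parameters `s, t > 0`, having density
`x ↦ x^(s-1) (1-x)^(t-1) Γ(s+t)/(Γ(s)Γ(t))` on `(0, 1)`. -/
noncomputable def betaDistMeasure (s t : ℝ) : Measure ℝ :=
  MeasureTheory.volume.withDensity (fun x => ENNReal.ofReal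
    (if x ∈ Set.Ioo (0 : ℝ) 1 then
      x ^ (s - 1) * (1 - x) ^ (t - 1) * Real.Gamma (s + t) / (Real.Gamma s * Real.Gamma t)
    else 0))

/-- The digamma function `ψ`, the derivative of `x ↦ ln Γ(x)`. -/
noncomputable def digamma (x : ℝ) : ℝ := deriv (fun y => Real.log (Real.Gamma y)) x

/-- The trigamma function `ψ′`, the derivative of the digamma function. -/
noncomputable def trigamma (x : ℝ) : ℝ := deriv digamma x

/-! Write `B(a, b) = ∫₀¹ x^(a-1) (1-x)^(b-1) dx = Γ(a) Γ(b) / Γ(a+b)`. Differentiating under the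
integral sign, `∂ₐB` and `∂_b ∂ₐB` are the integrals of `log x` and of `log x · log (1-x)` against
`x^(a-1) (1-x)^(b-1)`, the domination coming from `|log x|ᵖ ≤ p! ε⁻ᵖ x^(-ε)` on `(0, 1]`.
On the Gamma side `∂ₐ log B = ψ(a) - ψ(a+b)`, hence `∂ₐB = B (ψ(a) - ψ(a+b))` and
`∂_b ∂ₐB = B ((ψ(a) - ψ(a+b)) (ψ(b) - ψ(a+b)) - ψ′(a+b))`. Dividing by `B(s, t)` gives the
moments of `β(s, t)`. Derivatives in `b` reduce to derivatives in `a` through `x ↦ 1 - x`. -/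

open Real Set
open scoped Nat

theorem Real.analyticAt_Gamma {x : ℝ} (hx : 0 < x) : AnalyticAt ℝ Gamma x := by
  have hdiff : DifferentiableOn ℂ Complex.Gamma {z | 0 < z.re} := fun z hz =>
    (Complex.differentiableAt_Gamma z fun m h => by
      simp [h] at hz; linarith [m.cast_nonneg (α := ℝ)]).differentiableWithinAt
  have hC : AnalyticAt ℂ Complex.Gamma x :=
    hdiff.analyticAt ((isOpen_lt continuous_const Complex.continuous_re).mem_nhds (by simpa))
  simpa [Complex.Gamma_ofReal] using hC.re_ofReal

theorem analyticOnNhd_log_Gamma : AnalyticOnNhd ℝ (fun y => log (Gamma y)) (Ioi 0) :=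
  fun _ hx => (analyticAt_Gamma hx).log (Gamma_pos_of_pos hx)

theorem hasDerivAt_log_Gamma {x : ℝ} (hx : 0 < x) :
    HasDerivAt (fun y => log (Gamma y)) (digamma x) x :=
  (analyticOnNhd_log_Gamma x hx).differentiableAt.hasDerivAt

theorem hasDerivAt_digamma {x : ℝ} (hx : 0 < x) : HasDerivAt digamma (trigamma x) x :=
  (analyticOnNhd_log_Gamma.deriv x hx).differentiableAt.hasDerivAt

theorem hasDerivAt_Gamma_of_pos {x : ℝ} (hx : 0 < x) :
    HasDerivAt Gamma (Gamma x * digamma x) x := by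
  have h := (hasDerivAt_log_Gamma hx).exp
  rw [exp_log (Gamma_pos_of_pos hx)] at h
  exact h.congr_of_eventuallyEq <| (eventually_gt_nhds hx).mono fun y hy =>
    (exp_log (Gamma_pos_of_pos hy)).symm

theorem ProbabilityTheory.beta_comm (a b : ℝ) : beta a b = beta b a := by
  rw [beta, beta, mul_comm, add_comm]

theorem hasDerivAt_beta_left {a b : ℝ} (ha : 0 < a) (hb : 0 < b) :
    HasDerivAt (fun a' => beta a' b) (beta a b * (digamma a - digamma (a + b))) a := by
  have hab : 0 < a + b := add_pos ha hb
  have hden := (hasDerivAt_Gamma_of_pos hab).comp_add_const a b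
  have := ((hasDerivAt_Gamma_of_pos ha).mul_const (Gamma b)).div hden (Gamma_pos_of_pos hab).ne'
  refine this.congr_deriv ?_
  simp only [beta]
  field_simp [(Gamma_pos_of_pos hab).ne']

theorem hasDerivAt_beta_right {a b : ℝ} (ha : 0 < a) (hb : 0 < b) :
    HasDerivAt (fun b' => beta a b') (beta a b * (digamma b - digamma (a + b))) b := by
  simpa only [beta_comm a, add_comm b a] using hasDerivAt_beta_left hb ha

theorem hasDerivAt_beta_mul_digamma_sub_right {a b : ℝ} (ha : 0 < a) (hb : 0 < b) :
    HasDerivAt (fun b' => beta a b' * (digamma a - digamma (a + b')))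
      (beta a b * ((digamma a - digamma (a + b)) * (digamma b - digamma (a + b))
        - trigamma (a + b))) b := by
  have hψ := ((hasDerivAt_digamma (add_pos ha hb)).comp_const_add a b).const_sub (digamma a)
  refine ((hasDerivAt_beta_right ha hb).mul hψ).congr_deriv ?_
  ring

theorem abs_log_pow_le_rpow (p : ℕ) {x ε : ℝ} (hx₀ : 0 < x) (hx₁ : x ≤ 1) (hε : 0 < ε) :
    |log x| ^ p ≤ p ! / ε ^ p * x ^ (-ε) := by
  have hexp : x ^ (-ε) = exp (ε * |log x|) := by
    rw [rpow_def_of_pos hx₀, abs_of_nonpos (log_nonpos hx₀.le hx₁)]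
    ring_nf
  -- `exp y ≥ yᵖ / p!` at `y = ε |log x|`
  have h := pow_div_factorial_le_exp _ (mul_nonneg hε.le (abs_nonneg (log x))) p
  rw [div_le_iff₀ (by positivity), mul_pow] at h
  rw [hexp, div_mul_eq_mul_div, le_div_iff₀ (by positivity)]
  linarith

theorem integrableOn_rpow_mul_one_sub_rpow {a b : ℝ} (ha : 0 < a) (hb : 0 < b) :
    IntegrableOn (fun x : ℝ => x ^ (a - 1) * (1 - x) ^ (b - 1)) (Ioo 0 1) := by
  have h := Complex.betaIntegral_convergent (u := a) (v := b) (by simpa) (by simpa)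
  rw [intervalIntegrable_iff_integrableOn_Ioo_of_le zero_le_one] at h
  refine IntegrableOn.congr_fun h.norm (fun x ⟨hx₀, hx₁⟩ => ?_) measurableSet_Ioo
  rw [norm_mul, show (1 : ℂ) - x = ((1 - x : ℝ) : ℂ) by push_cast; ring,
    Complex.norm_cpow_eq_rpow_re_of_pos hx₀, Complex.norm_cpow_eq_rpow_re_of_pos (sub_pos.2 hx₁)]
  simp

noncomputable def betaLogIntegrand (p q : ℕ) (a b x : ℝ) : ℝ :=
  log x ^ p * log (1 - x) ^ q * (x ^ (a - 1) * (1 - x) ^ (b - 1))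

noncomputable def betaLogIntegral (p q : ℕ) (a b : ℝ) : ℝ :=
  ∫ x in Ioo 0 1, betaLogIntegrand p q a b x

section BetaLogIntegral

variable (p q : ℕ) {a b : ℝ}

theorem measurable_betaLogIntegrand : Measurable (betaLogIntegrand p q a b) := by
  unfold betaLogIntegrand
  fun_prop

theorem norm_betaLogIntegrand {x : ℝ} (hx : x ∈ Ioo 0 1) :
    ‖betaLogIntegrand p q a b x‖
      = |log x| ^ p * |log (1 - x)| ^ q * (x ^ (a - 1) * (1 - x) ^ (b - 1)) := by
  have : 0 < 1 - x := sub_pos.2 hx.2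
  have : 0 < x := hx.1
  rw [Real.norm_eq_abs, betaLogIntegrand, abs_mul, abs_mul, abs_pow, abs_pow,
    abs_of_pos (by positivity : 0 < x ^ (a - 1) * (1 - x) ^ (b - 1))]

theorem integrableOn_betaLogIntegrand (ha : 0 < a) (hb : 0 < b) :
    IntegrableOn (betaLogIntegrand p q a b) (Ioo 0 1) := by
  set C := p ! / (a / 2) ^ p * (q ! / (b / 2) ^ q)
  refine Integrable.mono'
    ((integrableOn_rpow_mul_one_sub_rpow (half_pos ha) (half_pos hb)).const_mul C)
    (measurable_betaLogIntegrand p q).aestronglyMeasurable ?_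
  rw [ae_restrict_iff' measurableSet_Ioo]
  filter_upwards with x hx
  have hx₀ : 0 < x := hx.1
  have hx₁ : 0 < 1 - x := sub_pos.2 hx.2
  have hlog := abs_log_pow_le_rpow p hx₀ hx.2.le (half_pos ha)
  have hlog₁ := abs_log_pow_le_rpow q hx₁ (by linarith) (half_pos hb)
  have e₀ : x ^ (-(a / 2)) * x ^ (a - 1) = x ^ (a / 2 - 1) := by
    rw [← rpow_add hx₀]; ring_nf
  have e₁ : (1 - x) ^ (-(b / 2)) * (1 - x) ^ (b - 1) = (1 - x) ^ (b / 2 - 1) := by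
    rw [← rpow_add hx₁]; ring_nf
  rw [norm_betaLogIntegrand p q hx]
  calc _ ≤ p ! / (a / 2) ^ p * x ^ (-(a / 2)) * (q ! / (b / 2) ^ q * (1 - x) ^ (-(b / 2)))
        * (x ^ (a - 1) * (1 - x) ^ (b - 1)) := by gcongr
    _ = C * (x ^ (-(a / 2)) * x ^ (a - 1) * ((1 - x) ^ (-(b / 2)) * (1 - x) ^ (b - 1))) := by
        ring
    _ = C * (x ^ (a / 2 - 1) * (1 - x) ^ (b / 2 - 1)) := by rw [e₀, e₁]

theorem betaLogIntegral_comm (a b : ℝ) : betaLogIntegral p q a b = betaLogIntegral q p b a := by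
  simp only [betaLogIntegral, ← integral_Ioc_eq_integral_Ioo,
    ← intervalIntegral.integral_of_le zero_le_one]
  have h := intervalIntegral.integral_comp_sub_left (betaLogIntegrand q p b a) (a := 0) (b := 1) 1
  rw [sub_self, sub_zero] at h
  rw [← h]
  refine intervalIntegral.integral_congr fun x _ => ?_
  simp only [betaLogIntegrand, sub_sub_cancel]
  ring

theorem hasDerivAt_betaLogIntegral_left (ha : 0 < a) (hb : 0 < b) :
    HasDerivAt (fun a' => betaLogIntegral p q a' b) (betaLogIntegral (p + 1) q a b) a := by
  refine (hasDerivAt_integral_of_dominated_loc_of_deriv_le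
    (F := fun a' x => betaLogIntegrand p q a' b x)
    (F' := fun a' x => betaLogIntegrand (p + 1) q a' b x) (Ioi_mem_nhds (half_lt_self ha))
    (.of_forall fun _ => (measurable_betaLogIntegrand p q).aestronglyMeasurable)
    (integrableOn_betaLogIntegrand p q ha hb)
    (measurable_betaLogIntegrand (p + 1) q).aestronglyMeasurable ?_
    (integrableOn_betaLogIntegrand (p + 1) q (half_pos ha) hb).norm ?_).2
  all_goals
    rw [ae_restrict_iff' measurableSet_Ioo]
    filter_upwards with x hx a' ha'
  · rw [norm_betaLogIntegrand _ _ hx, norm_betaLogIntegrand _ _ hx]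
    have : 0 < 1 - x := sub_pos.2 hx.2
    have hmono : x ^ (a' - 1) ≤ x ^ (a / 2 - 1) :=
      rpow_le_rpow_of_exponent_ge hx.1 hx.2.le (by linarith [mem_Ioi.1 ha'])
    exact mul_le_mul_of_nonneg_left (mul_le_mul_of_nonneg_right hmono (by positivity))
      (by positivity)
  · have hrpow := ((hasDerivAt_id' a').sub_const 1).const_rpow hx.1
    refine ((hrpow.mul_const ((1 - x) ^ (b - 1))).const_mul
      (log x ^ p * log (1 - x) ^ q)).congr_deriv ?_
    simp only [betaLogIntegrand]
    ring

theorem hasDerivAt_betaLogIntegral_right (ha : 0 < a) (hb : 0 < b) :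
    HasDerivAt (fun b' => betaLogIntegral p q a b') (betaLogIntegral p (q + 1) a b) b := by
  simpa only [betaLogIntegral_comm p, betaLogIntegral_comm p (q + 1)]
    using hasDerivAt_betaLogIntegral_left q p hb ha

end BetaLogIntegral

theorem betaLogIntegral_zero_zero {a b : ℝ} (ha : 0 < a) (hb : 0 < b) :
    betaLogIntegral 0 0 a b = beta a b := by
  rw [beta_eq_betaIntegralReal a b ha hb, Complex.betaIntegral,
    intervalIntegral.integral_of_le zero_le_one, integral_Ioc_eq_integral_Ioo,
    betaLogIntegral, ← Complex.ofReal_re (∫ x in Ioo 0 1, _), ← integral_complex_ofReal]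
  congr 1
  refine setIntegral_congr_fun measurableSet_Ioo fun x ⟨hx₀, hx₁⟩ => ?_
  simp only [betaLogIntegrand, pow_zero, one_mul]
  push_cast [Complex.ofReal_cpow hx₀.le, Complex.ofReal_cpow (sub_pos.2 hx₁).le]
  rfl

theorem betaLogIntegral_one_zero {a b : ℝ} (ha : 0 < a) (hb : 0 < b) :
    betaLogIntegral 1 0 a b = beta a b * (digamma a - digamma (a + b)) := by
  refine ((hasDerivAt_betaLogIntegral_left 0 0 ha hb).congr_of_eventuallyEq ?_).unique
    (hasDerivAt_beta_left ha hb)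
  filter_upwards [Ioi_mem_nhds ha] with a' ha'
  exact (betaLogIntegral_zero_zero ha' hb).symm

theorem betaLogIntegral_zero_one {a b : ℝ} (ha : 0 < a) (hb : 0 < b) :
    betaLogIntegral 0 1 a b = beta a b * (digamma b - digamma (a + b)) := by
  rw [betaLogIntegral_comm, betaLogIntegral_one_zero hb ha, beta_comm, add_comm]

theorem betaLogIntegral_one_one {a b : ℝ} (ha : 0 < a) (hb : 0 < b) :
    betaLogIntegral 1 1 a b = beta a b * ((digamma a - digamma (a + b))
      * (digamma b - digamma (a + b)) - trigamma (a + b)) := by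
  refine ((hasDerivAt_betaLogIntegral_right 1 0 ha hb).congr_of_eventuallyEq ?_).unique
    (hasDerivAt_beta_mul_digamma_sub_right ha hb)
  filter_upwards [Ioi_mem_nhds hb] with b' hb'
  exact (betaLogIntegral_one_zero ha hb').symm

theorem integral_betaDistMeasure {s t : ℝ} (hs : 0 < s) (ht : 0 < t) (g : ℝ → ℝ) :
    ∫ x, g x ∂betaDistMeasure s t
      = (∫ x in Ioo 0 1, g x * (x ^ (s - 1) * (1 - x) ^ (t - 1))) / beta s t := by
  have hmeas : Measurable fun x : ℝ => ENNReal.ofReal (if x ∈ Ioo (0 : ℝ) 1 then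
      x ^ (s - 1) * (1 - x) ^ (t - 1) * Gamma (s + t) / (Gamma s * Gamma t) else 0) :=
    (Measurable.ite measurableSet_Ioo (by fun_prop) measurable_const).ennreal_ofReal
  rw [betaDistMeasure, integral_withDensity_eq_integral_toReal_smul hmeas
    (ae_of_all _ fun _ => ENNReal.ofReal_lt_top), ← integral_div,
    ← integral_indicator measurableSet_Ioo]
  refine integral_congr_ae (ae_of_all _ fun x => ?_)
  by_cases hx : x ∈ Ioo 0 1
  · have hx₀ : 0 < x := hx.1
    have hx₁ : 0 < 1 - x := sub_pos.2 hx.2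
    have hB := beta_pos hs ht
    have hdens : x ^ (s - 1) * (1 - x) ^ (t - 1) * Gamma (s + t) / (Gamma s * Gamma t)
        = x ^ (s - 1) * (1 - x) ^ (t - 1) / beta s t := by
      rw [beta, div_div_eq_mul_div, mul_div_assoc]
    simp only [if_pos hx, indicator_of_mem hx, smul_eq_mul, hdens]
    rw [ENNReal.toReal_ofReal (by positivity)]
    ring
  · simp [hx]

theorem integral_log_pow_mul_log_one_sub_pow_betaDistMeasure (p q : ℕ) {s t : ℝ}
    (hs : 0 < s) (ht : 0 < t) :
    ∫ x, log x ^ p * log (1 - x) ^ q ∂betaDistMeasure s t = betaLogIntegral p q s t / beta s t :=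
  integral_betaDistMeasure hs ht _

/-- For `S ~ β(s, t)` with `s, t > 0`:
`E[ln(S) ln(1-S)] = -ψ′(s+t) + (ψ(s) - ψ(s+t))(ψ(t) - ψ(s+t))`; equivalently
`Cov(ln S, ln(1-S)) = -ψ′(s+t)`. -/
theorem beta_log_cross_moment (s t : ℝ) (hs : 0 < s) (ht : 0 < t) :
    (∫ x, Real.log x * Real.log (1 - x) ∂(betaDistMeasure s t)
      = -trigamma (s + t) + (digamma s - digamma (s + t)) * (digamma t - digamma (s + t)))
    ∧ (∫ x, Real.log x * Real.log (1 - x) ∂(betaDistMeasure s t)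
        - (∫ x, Real.log x ∂(betaDistMeasure s t)) * (∫ x, Real.log (1 - x) ∂(betaDistMeasure s t))
      = -trigamma (s + t)) := by
  have moment p q := integral_log_pow_mul_log_one_sub_pow_betaDistMeasure p q hs ht
  have h11 := moment 1 1
  have h10 := moment 1 0
  have h01 := moment 0 1
  simp only [pow_one, pow_zero, mul_one, one_mul] at h11 h10 h01
  have hB := (beta_pos hs ht).ne'
  rw [h11, h10, h01, betaLogIntegral_one_one hs ht, betaLogIntegral_one_zero hs ht,
    betaLogIntegral_zero_one hs ht]
  constructor <;> field_simp <;> ring
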